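/- arXiv:2401.17933 — 5 statements merged into one kernel-verified Lean document; each statement's English description precedes it below -/
import Mathlib

section
/- For a symmetric positive definite matrix P and symmetric positive definite R, the Kalman gain K(P,C,R) = P Cᵀ (C P Cᵀ + R)⁻¹ equals (P⁻¹ + Cᵀ R⁻¹ C)⁻¹ Cᵀ R⁻¹. -/
open Matrix

theorem kalman_gain_identity {n p : ℕ}
    (P : Matrix (Fin n) (Fin n) ℝ) (R : Matrix (Fin p) (Fin p) ℝ)
    (C : Matrix (Fin p) (Fin n) ℝ) (hP : P.PosDef) (hR : R.PosDef) :
    P * Cᵀ * (C * P * Cᵀ + R)⁻¹ = (P⁻¹ + Cᵀ * R⁻¹ * C)⁻¹ * Cᵀ * R⁻¹ := by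
  have hCT : (Cᵀ : Matrix (Fin n) (Fin p) ℝ) = Cᴴ := (conjTranspose_eq_transpose_of_trivial C).symm
  have hS : (C * P * Cᵀ + R).PosDef := by
    refine Matrix.PosDef.posSemidef_add ?_ hR
    rw [hCT]
    exact hP.posSemidef.mul_mul_conjTranspose_same C
  have hM : (P⁻¹ + Cᵀ * R⁻¹ * C).PosDef := by
    refine Matrix.PosDef.add_posSemidef hP.inv ?_
    rw [hCT]
    exact hR.inv.posSemidef.conjTranspose_mul_mul_same C
  have hPinv : P⁻¹ * P = 1 := Matrix.nonsing_inv_mul P ((Matrix.isUnit_iff_isUnit_det P).1 hP.isUnit)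
  have hRinv : R⁻¹ * R = 1 := Matrix.nonsing_inv_mul R ((Matrix.isUnit_iff_isUnit_det R).1 hR.isUnit)
  have hMinv : (P⁻¹ + Cᵀ * R⁻¹ * C)⁻¹ * (P⁻¹ + Cᵀ * R⁻¹ * C) = 1 :=
    Matrix.nonsing_inv_mul _ ((Matrix.isUnit_iff_isUnit_det _).1 hM.isUnit)
  have hSinv : (C * P * Cᵀ + R) * (C * P * Cᵀ + R)⁻¹ = 1 :=
    Matrix.mul_nonsing_inv _ ((Matrix.isUnit_iff_isUnit_det _).1 hS.isUnit)
  have key : (P⁻¹ + Cᵀ * R⁻¹ * C) * (P * Cᵀ) = Cᵀ * R⁻¹ * (C * P * Cᵀ + R) := by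
    rw [Matrix.add_mul, Matrix.mul_add, ← Matrix.mul_assoc P⁻¹ P, hPinv, Matrix.one_mul,
      Matrix.mul_assoc Cᵀ R⁻¹ R, hRinv, Matrix.mul_one]
    simp only [Matrix.mul_assoc]
    exact add_comm _ _
  calc P * Cᵀ * (C * P * Cᵀ + R)⁻¹
      = (P⁻¹ + Cᵀ * R⁻¹ * C)⁻¹ * ((P⁻¹ + Cᵀ * R⁻¹ * C) * (P * Cᵀ)) * (C * P * Cᵀ + R)⁻¹ := by
        rw [← Matrix.mul_assoc, hMinv, Matrix.one_mul]
    _ = (P⁻¹ + Cᵀ * R⁻¹ * C)⁻¹ * (Cᵀ * R⁻¹ * (C * P * Cᵀ + R)) * (C * P * Cᵀ + R)⁻¹ := by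
        rw [key]
    _ = (P⁻¹ + Cᵀ * R⁻¹ * C)⁻¹ * Cᵀ * R⁻¹ := by
        rw [Matrix.mul_assoc _ (Cᵀ * R⁻¹ * (C * P * Cᵀ + R)) _,
          Matrix.mul_assoc (Cᵀ * R⁻¹) _ _, hSinv, Matrix.mul_one, ← Matrix.mul_assoc,
          Matrix.mul_assoc _ Cᵀ R⁻¹]
end

section
/- Let V⁻(x₀,x₁) = (1/2)‖x₀ - x̂₀‖²_{P₀⁻¹} + (1/2)‖x₁ - A x₀‖²_{Q⁻¹} with P₀, Q symmetric positive definite. Then min over x₀ of V⁻(x₀, x̂₁) equals (1/2)‖x̂₁ - A x̂₀‖²_{P₁⁻¹} where P₁ = A P₀ Aᵀ + Q, and the minimizer is x₀* = x̂₀ + P₀ Aᵀ (A P₀ Aᵀ + Q)⁻¹ (x̂₁ - A x̂₀). -/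
/-!
Substitute `λ = (A P₀ Aᵀ + Q)⁻¹ d` with `d = x̂₁ - A x̂₀`, so that the minimizer is `x̂₀ + m` with
`m = P₀ Aᵀ λ`. Then `P₀⁻¹ m = Aᵀ λ` and `d - A m = Q λ`, and expanding both quadratic forms around
`m` makes the cross terms cancel:
`V⁻(x̂₀ + m + u, x̂₁) = ½ ‖d‖²_{P₁⁻¹} + ½ ‖u‖²_{P₀⁻¹} + ½ ‖A u‖²_{Q⁻¹}`,
whose last two terms are nonnegative and vanish at `u = 0`.
-/

open Matrix

namespace Matrix

variable {R ι κ : Type*} [CommRing R] [Fintype ι] [Fintype κ]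

theorem IsSymm.dotProduct_mulVec_comm {M : Matrix ι ι R} (hM : M.IsSymm) (x y : ι → R) :
    x ⬝ᵥ (M *ᵥ y) = y ⬝ᵥ (M *ᵥ x) := by
  rw [dotProduct_mulVec, ← mulVec_transpose, hM.eq, dotProduct_comm]

theorem IsSymm.dotProduct_mulVec_add {M : Matrix ι ι R} (hM : M.IsSymm) (x y : ι → R) :
    (x + y) ⬝ᵥ (M *ᵥ (x + y)) = x ⬝ᵥ (M *ᵥ x) + 2 * (y ⬝ᵥ (M *ᵥ x)) + y ⬝ᵥ (M *ᵥ y) := by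
  rw [mulVec_add, dotProduct_add, add_dotProduct, add_dotProduct, hM.dotProduct_mulVec_comm x y]
  ring

theorem IsSymm.dotProduct_mulVec_sub {M : Matrix ι ι R} (hM : M.IsSymm) (x y : ι → R) :
    (x - y) ⬝ᵥ (M *ᵥ (x - y)) = x ⬝ᵥ (M *ᵥ x) - 2 * (y ⬝ᵥ (M *ᵥ x)) + y ⬝ᵥ (M *ᵥ y) := by
  rw [mulVec_sub, dotProduct_sub, sub_dotProduct, sub_dotProduct, hM.dotProduct_mulVec_comm x y]
  ring

theorem PosDef.dotProduct_mulVec_self_nonneg {M : Matrix ι ι ℝ} (hM : M.PosDef) (v : ι → ℝ) :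
    0 ≤ v ⬝ᵥ (M *ᵥ v) := by
  simpa using hM.posSemidef.dotProduct_mulVec_nonneg v

variable [DecidableEq ι] [DecidableEq κ]

theorem dotProduct_inv_mulVec_complete_square {P : Matrix ι ι R} {Q : Matrix κ κ R}
    (A : Matrix κ ι R) (hP : P.IsSymm) (hQ : Q.IsSymm) (hPdet : IsUnit P.det)
    (hQdet : IsUnit Q.det) (hSdet : IsUnit (A * P * Aᵀ + Q).det) (e : ι → R) (d : κ → R) :
    let u := e - (P * Aᵀ * (A * P * Aᵀ + Q)⁻¹) *ᵥ d
    e ⬝ᵥ (P⁻¹ *ᵥ e) + (d - A *ᵥ e) ⬝ᵥ (Q⁻¹ *ᵥ (d - A *ᵥ e)) =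
      d ⬝ᵥ ((A * P * Aᵀ + Q)⁻¹ *ᵥ d) + u ⬝ᵥ (P⁻¹ *ᵥ u) + (A *ᵥ u) ⬝ᵥ (Q⁻¹ *ᵥ (A *ᵥ u)) := by
  intro u
  set l := (A * P * Aᵀ + Q)⁻¹ *ᵥ d
  set m := P *ᵥ (Aᵀ *ᵥ l)
  have he : e = m + u := by simp only [u, m, l, mulVec_mulVec, add_sub_cancel]
  have hd : A *ᵥ m + Q *ᵥ l = d := by
    rw [mulVec_mulVec, mulVec_mulVec, ← add_mulVec, mulVec_mulVec, mul_nonsing_inv _ hSdet,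
      one_mulVec]
  have hPm : P⁻¹ *ᵥ m = Aᵀ *ᵥ l := by
    rw [mulVec_mulVec, nonsing_inv_mul _ hPdet, one_mulVec]
  have hQl : Q⁻¹ *ᵥ (Q *ᵥ l) = l := by
    rw [mulVec_mulVec, nonsing_inv_mul _ hQdet, one_mulVec]
  have hr : d - A *ᵥ e = Q *ᵥ l - A *ᵥ u := by
    rw [he, mulVec_add, ← hd]; abel
  have hdl : l ⬝ᵥ (A *ᵥ m) + (Q *ᵥ l) ⬝ᵥ l = d ⬝ᵥ l := by
    rw [dotProduct_comm l, ← add_dotProduct, hd]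
  rw [hr, he, hP.inv.dotProduct_mulVec_add, hQ.inv.dotProduct_mulVec_sub, hPm, hQl,
    dotProduct_transpose_mulVec, dotProduct_transpose_mulVec]
  linear_combination hdl + 2 * dotProduct_comm l (A *ᵥ u)

theorem PosDef.dotProduct_inv_mulVec_complete_square {P : Matrix ι ι ℝ} {Q : Matrix κ κ ℝ}
    (hP : P.PosDef) (hQ : Q.PosDef) (A : Matrix κ ι ℝ) (e : ι → ℝ) (d : κ → ℝ) :
    let u := e - (P * Aᵀ * (A * P * Aᵀ + Q)⁻¹) *ᵥ d
    e ⬝ᵥ (P⁻¹ *ᵥ e) + (d - A *ᵥ e) ⬝ᵥ (Q⁻¹ *ᵥ (d - A *ᵥ e)) =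
      d ⬝ᵥ ((A * P * Aᵀ + Q)⁻¹ *ᵥ d) + u ⬝ᵥ (P⁻¹ *ᵥ u) + (A *ᵥ u) ⬝ᵥ (Q⁻¹ *ᵥ (A *ᵥ u)) := by
  have hS : (A * P * Aᵀ + Q).PosDef := by
    simpa using PosDef.posSemidef_add (hP.posSemidef.mul_mul_conjTranspose_same A) hQ
  exact Matrix.dotProduct_inv_mulVec_complete_square A (isHermitian_iff_isSymm.mp hP.isHermitian)
    (isHermitian_iff_isSymm.mp hQ.isHermitian) (isUnit_iff_isUnit_det _ |>.mp hP.isUnit)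
    (isUnit_iff_isUnit_det _ |>.mp hQ.isUnit) (isUnit_iff_isUnit_det _ |>.mp hS.isUnit) e d

end Matrix

theorem partial_minimization_update {n : ℕ}
    (P0 Q A : Matrix (Fin n) (Fin n) ℝ) (hP0 : P0.PosDef) (hQ : Q.PosDef)
    (xhat0 xhat1 : Fin n → ℝ)
    (Vm : (Fin n → ℝ) → (Fin n → ℝ) → ℝ)
    (hVm : ∀ x0 x1, Vm x0 x1 = (1/2) * ((x0 - xhat0) ⬝ᵥ (P0⁻¹ *ᵥ (x0 - xhat0)))
        + (1/2) * ((x1 - A *ᵥ x0) ⬝ᵥ (Q⁻¹ *ᵥ (x1 - A *ᵥ x0))))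
    (P1 : Matrix (Fin n) (Fin n) ℝ) (hP1 : P1 = A * P0 * Aᵀ + Q)
    (xstar0 : Fin n → ℝ)
    (hxstar0 : xstar0 = xhat0 + (P0 * Aᵀ * (A * P0 * Aᵀ + Q)⁻¹) *ᵥ (xhat1 - A *ᵥ xhat0)) :
    (∀ x0, (1/2) * ((xhat1 - A *ᵥ xhat0) ⬝ᵥ (P1⁻¹ *ᵥ (xhat1 - A *ᵥ xhat0))) ≤ Vm x0 xhat1)
      ∧ Vm xstar0 xhat1 = (1/2) * ((xhat1 - A *ᵥ xhat0) ⬝ᵥ (P1⁻¹ *ᵥ (xhat1 - A *ᵥ xhat0))) := by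
  subst hP1
  set d := xhat1 - A *ᵥ xhat0 with hd
  have hV : ∀ x0, Vm x0 xhat1 = (1/2) * (d ⬝ᵥ ((A * P0 * Aᵀ + Q)⁻¹ *ᵥ d)) + (1/2) *
      ((x0 - xstar0) ⬝ᵥ (P0⁻¹ *ᵥ (x0 - xstar0))
        + (A *ᵥ (x0 - xstar0)) ⬝ᵥ (Q⁻¹ *ᵥ (A *ᵥ (x0 - xstar0)))) := by
    intro x0
    have hsquare := hP0.dotProduct_inv_mulVec_complete_square hQ A (x0 - xhat0) d
    have hu : x0 - xhat0 - (P0 * Aᵀ * (A * P0 * Aᵀ + Q)⁻¹) *ᵥ d = x0 - xstar0 := by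
      rw [hxstar0]; abel
    have hr : xhat1 - A *ᵥ x0 = d - A *ᵥ (x0 - xhat0) := by
      rw [hd, mulVec_sub]; abel
    simp only [hu] at hsquare
    rw [hVm, hr]
    linear_combination (1/2 : ℝ) * hsquare
  refine ⟨fun x0 => ?_, by simp [hV xstar0]⟩
  have := add_nonneg (hP0.inv.dotProduct_mulVec_self_nonneg (x0 - xstar0))
    (hQ.inv.dotProduct_mulVec_self_nonneg (A *ᵥ (x0 - xstar0)))
  linarith [hV x0]
end

section
/- Let ϑ(z) = ‖z − ξ‖²_Q + d with Q symmetric positive definite, and let Γ ⊆ Ω be nonempty closed convex subsets of ℝⁿ. Let ẑ minimize ϑ over Ω and z̄ minimize ϑ over Γ, and set Δz = z̄ − ẑ. Then ϑ(z̄) ≥ ϑ(ẑ) + ϑ(Δz + ξ) − d. -/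
/-!
Write `a = ẑ - ξ` and `b = z̄ - ẑ`. Along the segment `ẑ + t b ⊆ Ω` (`t ∈ [0, 1]`) the quadratic
`ϑ(ẑ + t b) = ϑ(ẑ) + t (aᵀQb + bᵀQa) + t² bᵀQb` is minimal at `t = 0`, so its slope
`aᵀQb + bᵀQa` is nonnegative; evaluating at `t = 1` gives `ϑ(z̄) ≥ ϑ(ẑ) + bᵀQb`.
-/

open Set Filter Topology

theorem nonneg_of_forall_mul_add_mul_sq_nonneg {s c : ℝ}
    (h : ∀ t ∈ Ioc (0 : ℝ) 1, 0 ≤ t * s + t ^ 2 * c) : 0 ≤ s := by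
  have hlim : Tendsto (fun t : ℝ => s + t * c) (𝓝[>] 0) (𝓝 s) := by
    refine tendsto_nhdsWithin_of_tendsto_nhds ?_
    exact (continuous_const.add (continuous_id.mul continuous_const)).tendsto' 0 s (by simp)
  refine ge_of_tendsto hlim ?_
  filter_upwards [Ioc_mem_nhdsGT zero_lt_one] with t ht
  have := h t ht
  have hpos : 0 < t := ht.1
  nlinarith

section Bilinear

variable {E : Type*} [AddCommGroup E] [Module ℝ E] (B : E →ₗ[ℝ] E →ₗ[ℝ] ℝ)

theorem LinearMap.apply_add_smul_self (a b : E) (t : ℝ) :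
    B (a + t • b) (a + t • b) = B a a + t * (B a b + B b a) + t ^ 2 * B b b := by
  simp only [map_add, map_smul, LinearMap.add_apply, LinearMap.smul_apply, smul_eq_mul]
  ring

variable {B} {s : Set E} {ξ x y : E}

theorem IsMinOn.bilin_sub_polar_nonneg (hmin : IsMinOn (fun z => B (z - ξ) (z - ξ)) s x)
    (hs : Convex ℝ s) (hx : x ∈ s) (hy : y ∈ s) :
    0 ≤ B (x - ξ) (y - x) + B (y - x) (x - ξ) := by
  refine nonneg_of_forall_mul_add_mul_sq_nonneg (c := B (y - x) (y - x)) fun t ht => ?_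
  have hmem : x + t • (y - x) ∈ s := hs.add_smul_sub_mem hx hy (Ioc_subset_Icc_self ht)
  have hle : B (x - ξ) (x - ξ) ≤ B (x + t • (y - x) - ξ) (x + t • (y - x) - ξ) := hmin hmem
  rw [add_sub_right_comm, B.apply_add_smul_self] at hle
  linarith

theorem IsMinOn.bilin_sub_add_le (hmin : IsMinOn (fun z => B (z - ξ) (z - ξ)) s x)
    (hs : Convex ℝ s) (hx : x ∈ s) (hy : y ∈ s) :
    B (x - ξ) (x - ξ) + B (y - x) (y - x) ≤ B (y - ξ) (y - ξ) := by
  have hpolar := hmin.bilin_sub_polar_nonneg hs hx hy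
  have hexp := B.apply_add_smul_self (x - ξ) (y - x) 1
  rw [one_smul, sub_add_sub_cancel'] at hexp
  linarith

end Bilinear

open Matrix

theorem constrained_min_lower_bound_general {n : ℕ}
    (Q : Matrix (Fin n) (Fin n) ℝ)
    (ξ : Fin n → ℝ) (d : ℝ)
    (ϑ : (Fin n → ℝ) → ℝ)
    (hϑ : ∀ z, ϑ z = (z - ξ) ⬝ᵥ (Q *ᵥ (z - ξ)) + d)
    (Γ Ω : Set (Fin n → ℝ))
    (hΩconv : Convex ℝ Ω)
    (hsub : Γ ⊆ Ω)
    (zhat zbar : Fin n → ℝ)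
    (hzhat : zhat ∈ Ω) (hzhatmin : ∀ z ∈ Ω, ϑ zhat ≤ ϑ z)
    (hzbar : zbar ∈ Γ) :
    ϑ zhat + ϑ ((zbar - zhat) + ξ) - d ≤ ϑ zbar := by
  have hmin : IsMinOn (fun z => toLinearMap₂' ℝ Q (z - ξ) (z - ξ)) Ω zhat := fun z hz => by
    simpa only [mem_ofPred_eq, toLinearMap₂'_apply', hϑ, add_le_add_iff_right] using hzhatmin z hz
  have hpyth := hmin.bilin_sub_add_le hΩconv hzhat (hsub hzbar)
  simp only [toLinearMap₂'_apply'] at hpyth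
  rw [hϑ, hϑ, hϑ, add_sub_cancel_right]
  linarith

theorem constrained_min_lower_bound {n : ℕ}
    (Q : Matrix (Fin n) (Fin n) ℝ) (hQ : Q.PosDef)
    (ξ : Fin n → ℝ) (d : ℝ)
    (ϑ : (Fin n → ℝ) → ℝ)
    (hϑ : ∀ z, ϑ z = (z - ξ) ⬝ᵥ (Q *ᵥ (z - ξ)) + d)
    (Γ Ω : Set (Fin n → ℝ))
    (hΓne : Γ.Nonempty) (hΓclosed : IsClosed Γ) (hΓconv : Convex ℝ Γ)
    (hΩne : Ω.Nonempty) (hΩclosed : IsClosed Ω) (hΩconv : Convex ℝ Ω)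
    (hsub : Γ ⊆ Ω)
    (zhat zbar : Fin n → ℝ)
    (hzhat : zhat ∈ Ω) (hzhatmin : ∀ z ∈ Ω, ϑ zhat ≤ ϑ z)
    (hzbar : zbar ∈ Γ) (hzbarmin : ∀ z ∈ Γ, ϑ zbar ≤ ϑ z) :
    ϑ zhat + ϑ ((zbar - zhat) + ξ) - d ≤ ϑ zbar :=
  constrained_min_lower_bound_general Q ξ d ϑ hϑ Γ Ω hΩconv hsub zhat zbar hzhat hzhatmin hzbar
end

section
/- Let Q be symmetric positive definite, A a matrix, and Π symmetric positive definite. Then Aᵀ (Q + A Π Aᵀ)⁻¹ A ≤ Π⁻¹ in the Loewner order. -/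
/-! Both Schur complements of the Hermitian block matrix `[[S, B], [Bᴴ, P⁻¹]]` are positive
semidefinite as soon as one is. With `S = Q + A Π Aᵀ` and `B = A`, the complement of the corner
`P⁻¹ = Π⁻¹` is `S - A Π Aᵀ = Q`, so the complement of the corner `S` is `Π⁻¹ - Aᵀ S⁻¹ A ≥ 0`. -/

open Matrix

namespace Matrix.PosDef

variable {m n K : Type*} [Fintype m] [Fintype n] [DecidableEq m] [DecidableEq n]
  [Field K] [PartialOrder K] [StarRing K] [StarOrderedRing K]

theorem posSemidef_inv_sub_of_posSemidef_sub {S : Matrix m m K} {P : Matrix n n K}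
    (hS : S.PosDef) (hP : P.PosDef) (B : Matrix m n K) (h : (S - B * P * Bᴴ).PosSemidef) :
    (P⁻¹ - Bᴴ * S⁻¹ * B).PosSemidef := by
  let := hS.isUnit.invertible
  let := hP.inv.isUnit.invertible
  have hblock : (fromBlocks S B Bᴴ P⁻¹).PosSemidef := by
    rwa [fromBlocks₂₂ S B hP.inv,
      nonsing_inv_nonsing_inv _ (isUnit_iff_isUnit_det P |>.1 hP.isUnit)]
  rwa [fromBlocks₁₁ B P⁻¹ hS] at hblock

end Matrix.PosDef

theorem information_bound_loewner {m n : ℕ}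
    (A : Matrix (Fin m) (Fin n) ℝ)
    (Q : Matrix (Fin m) (Fin m) ℝ) (hQ : Q.PosDef)
    (Pm : Matrix (Fin n) (Fin n) ℝ) (hPm : Pm.PosDef) :
    (Pm⁻¹ - Aᵀ * (Q + A * Pm * Aᵀ)⁻¹ * A).PosSemidef := by
  rw [← conjTranspose_eq_transpose_of_trivial A]
  have hS : (Q + A * Pm * Aᴴ).PosDef :=
    hQ.add_posSemidef (hPm.posSemidef.mul_mul_conjTranspose_same A)
  refine hS.posSemidef_inv_sub_of_posSemidef_sub hPm A ?_
  rw [add_sub_cancel_right]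
  exact hQ.posSemidef
end

section
/- For any square matrices A ∈ ℝ^{n×n}, Q symmetric positive definite, Π symmetric positive definite, and integer k ≥ 0, define Π_k = A^k Π (A^k)ᵀ + Σ_{j=0}^{k-1} A^j Q (A^j)ᵀ. Then (A^k)ᵀ Π_k⁻¹ A^k ≤ Π⁻¹ in the Loewner order. -/
/-!
Since `Π_k - A^k Π (A^k)ᵀ = ∑_{j<k} A^j Q (A^j)ᵀ ≥ 0`, the block matrix `[[Π⁻¹, (A^k)ᵀ], [A^k, Π_k]]`
has a positive semidefinite Schur complement with respect to its upper-left block, so it is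
positive semidefinite. Its Schur complement with respect to the lower-right block,
`Π⁻¹ - (A^k)ᵀ Π_k⁻¹ A^k`, is then positive semidefinite too.
-/

open Matrix Finset

namespace Matrix

variable {m n : Type*} [Fintype m] [Fintype n]

theorem PosSemidef.sum_mul_mul_conjTranspose {ι R : Type*} [CommRing R] [PartialOrder R]
    [StarRing R] [StarOrderedRing R] {Q : Matrix n n R} (hQ : Q.PosSemidef) (B : ι → Matrix m n R)
    (s : Finset ι) : (∑ j ∈ s, B j * Q * (B j)ᴴ).PosSemidef :=
  posSemidef_sum s fun _ _ => hQ.mul_mul_conjTranspose_same _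

variable {K : Type*} [Field K] [PartialOrder K] [StarRing K] [StarOrderedRing K]
  [DecidableEq m] [DecidableEq n]

theorem PosDef.posSemidef_inv_sub_conjTranspose_mul_inv_mul {P : Matrix m m K}
    {M : Matrix n n K} (hP : P.PosDef) (hM : M.PosDef) (B : Matrix n m K)
    (h : (M - B * P * Bᴴ).PosSemidef) : (P⁻¹ - Bᴴ * M⁻¹ * B).PosSemidef := by
  let _ := hP.inv.isUnit.invertible
  let _ := hM.isUnit.invertible
  have hblock : (fromBlocks P⁻¹ Bᴴ Bᴴᴴ M).PosSemidef := by
    rwa [PosDef.fromBlocks₁₁ _ _ hP.inv, conjTranspose_conjTranspose,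
      nonsing_inv_nonsing_inv _ ((isUnit_iff_isUnit_det P).mp hP.isUnit)]
  rwa [PosDef.fromBlocks₂₂ _ _ hM, conjTranspose_conjTranspose] at hblock

/-- The matrix `Π_k` of the statement, with `P` for `Π`. -/
def openLoopCovariance (A Q P : Matrix n n K) (k : ℕ) : Matrix n n K :=
  A ^ k * P * (A ^ k)ᴴ + ∑ j ∈ range k, A ^ j * Q * (A ^ j)ᴴ

theorem openLoopCovariance_posDef {A Q P : Matrix n n K} {k : ℕ} (hQ : Q.PosDef)
    (hP : P.PosDef) : (openLoopCovariance A Q P k).PosDef := by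
  rcases k with _ | k
  · simpa [openLoopCovariance] using hP
  · rw [openLoopCovariance, sum_range_succ', ← add_assoc]
    simp only [pow_zero, one_mul, conjTranspose_one, mul_one]
    exact PosDef.posSemidef_add ((hP.posSemidef.mul_mul_conjTranspose_same _).add
      (hQ.posSemidef.sum_mul_mul_conjTranspose _ _)) hQ

end Matrix

theorem open_loop_covariance_bound {n : ℕ}
    (A : Matrix (Fin n) (Fin n) ℝ)
    (Q Pm : Matrix (Fin n) (Fin n) ℝ) (hQ : Q.PosDef) (hPm : Pm.PosDef)
    (k : ℕ)
    (Pmk : Matrix (Fin n) (Fin n) ℝ)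
    (hPmk : Pmk = A ^ k * Pm * (A ^ k)ᵀ + ∑ j ∈ Finset.range k, A ^ j * Q * (A ^ j)ᵀ) :
    (Pm⁻¹ - (A ^ k)ᵀ * Pmk⁻¹ * A ^ k).PosSemidef := by
  simp only [← conjTranspose_eq_transpose_of_trivial] at hPmk ⊢
  subst hPmk
  refine hPm.posSemidef_inv_sub_conjTranspose_mul_inv_mul (openLoopCovariance_posDef hQ hPm) _ ?_
  rw [openLoopCovariance, add_sub_cancel_left]
  exact hQ.posSemidef.sum_mul_mul_conjTranspose _ _
end
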